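/- Let A be an m×m matrix with nonnegative integer entries (m ≥ 1). Then there exist an integer ℓ ≥ 1, a permutation σ of {1,…,m}, and indices 0 = m₀ < m₁ < … < m_r = m such that the matrix B defined by B_{ij} = (A^ℓ)_{σ(i)σ(j)} is block upper triangular with respect to the partition of {1,…,m} into the consecutive intervals (m_{t−1}, m_t] (i.e., B_{ij} = 0 whenever the block containing i comes strictly after the block containing j), and each diagonal block (B_{ij})_{m_{t−1} < i,j ≤ m_t} is either the zero matrix or primitive. -/

import Mathlib

/-- A square matrix of nonnegative integers (indexed by an arbitrary fintype)
is primitive if some power `n ≥ 1` of it has all entries positive. -/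
def Matrix.IsPrimitiveNat {ι : Type*} [Fintype ι] [DecidableEq ι]
    (A : Matrix ι ι ℕ) : Prop :=
  ∃ n : ℕ, 1 ≤ n ∧ ∀ i j, 0 < (A ^ n) i j

/-- The diagonal block of `B` corresponding to the interval `[lo, hi)` of indices,
viewed as a matrix indexed by the subtype of indices lying in that interval. -/
def diagBlock {m : ℕ} (B : Matrix (Fin m) (Fin m) ℕ) (lo hi : ℕ) :
    Matrix {i : Fin m // lo ≤ i.val ∧ i.val < hi} {i : Fin m // lo ≤ i.val ∧ i.val < hi} ℕ :=
  fun p q => B p.val q.val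


/-!
The support of a product of nonnegative matrices depends only on the supports of the factors,
and there are finitely many supports, so some power `B = A ^ ℓ` has an idempotent support:
`B i j > 0` and `B j k > 0` force `B i k > 0`. The relation "`i = j` or `B i j > 0`" is then a
preorder. Ordering the indices by the colex order of their sets of predecessors, a linear order
extending this preorder, and cutting at its equivalence classes makes `B` block upper triangular,
and by transitivity a diagonal block with one positive entry has all entries positive.
-/

open Finset Relation

theorem Matrix.mul_apply_pos_iff {l n o : Type*} [Fintype n] (A : Matrix l n ℕ)
    (B : Matrix n o ℕ) (i : l) (j : o) : 0 < (A * B) i j ↔ ∃ k, 0 < A i k ∧ 0 < B k j := by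
  simp [Matrix.mul_apply, Finset.sum_pos_iff]

theorem exists_pow_map_mul_self_eq {M β : Type*} [Monoid M] [Finite β] (φ : M → β)
    (hφ : ∀ x y z, φ x = φ y → φ (x * z) = φ (y * z)) (x : M) :
    ∃ ℓ, 1 ≤ ℓ ∧ φ (x ^ ℓ * x ^ ℓ) = φ (x ^ ℓ) := by
  obtain ⟨a, b, hne, hab⟩ := Finite.exists_ne_map_eq_of_infinite fun n => φ (x ^ n)
  wlog hlt : a < b generalizing a b
  · exact this b a hne.symm hab.symm (by omega)
  obtain ⟨d, hd, rfl⟩ : ∃ d, 1 ≤ d ∧ b = a + d := ⟨b - a, by omega, by omega⟩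
  have hshift : ∀ n, a ≤ n → φ (x ^ (n + d)) = φ (x ^ n) := fun n hn => by
    obtain ⟨k, rfl⟩ := Nat.exists_eq_add_of_le hn
    rw [add_right_comm, pow_add x (a + d), pow_add x a k]
    exact hφ _ _ _ hab.symm
  have hperiodic : ∀ q n, a ≤ n → φ (x ^ (n + q * d)) = φ (x ^ n) := by
    intro q n hn
    induction q with
    | zero => simp
    | succ q ih => rw [add_mul, one_mul, ← add_assoc, hshift _ (by omega), ih]
  refine ⟨(a + 1) * d, by nlinarith, ?_⟩
  rw [← pow_add, hperiodic _ _ (by nlinarith)]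

theorem Matrix.exists_pow_pos_trans {n : Type*} [Fintype n] [DecidableEq n] (A : Matrix n n ℕ) :
    ∃ ℓ, 1 ≤ ℓ ∧ IsTrans n fun i j => 0 < (A ^ ℓ) i j := by
  obtain ⟨ℓ, hℓ, hidem⟩ := exists_pow_map_mul_self_eq (fun B : Matrix n n ℕ => fun i j => 0 < B i j)
    (fun B C D h => by
      ext i j
      simp only [Matrix.mul_apply_pos_iff, congrFun₂ h]) A
  refine ⟨ℓ, hℓ, ⟨fun i j k hij hjk => ?_⟩⟩
  rw [← congrFun₂ hidem i k, Matrix.mul_apply_pos_iff]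
  exact ⟨j, hij, hjk⟩

theorem Monotone.val_lt_card_filter_lt_iff {m : ℕ} {β : Type*} [LinearOrder β] {b : Fin m → β}
    (hb : Monotone b) (t : β) (i : Fin m) : i.val < #{j | b j < t} ↔ b i < t := by
  constructor
  · intro hi
    by_contra hit
    have hsub : ({j | b j < t} : Finset (Fin m)) ⊆ Iio i := fun j hj => by
      simp only [mem_filter, mem_univ, true_and] at hj
      exact mem_Iio.2 (lt_of_not_ge fun hij => hit (lt_of_le_of_lt (hb hij) hj))
    have := card_le_card hsub
    rw [Fin.card_Iio] at this
    omega
  · intro hit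
    have hsub : Iic i ⊆ ({j | b j < t} : Finset (Fin m)) := fun j hj => by
      simp only [mem_filter, mem_univ, true_and]
      exact lt_of_le_of_lt (hb (mem_Iic.1 hj)) hit
    have := card_le_card hsub
    rw [Fin.card_Iic] at this
    omega

theorem exists_blocks_of_monotone_surjective {m r : ℕ} (b : Fin m → Fin r) (hmono : Monotone b)
    (hsurj : Function.Surjective b) :
    ∃ c : Fin (r + 1) → ℕ, StrictMono c ∧ c 0 = 0 ∧ c (Fin.last r) = m ∧
      ∀ t i, (c t.castSucc ≤ i.val ∧ i.val < c t.succ ↔ b i = t) := by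
  have hval : Monotone fun i => (b i : ℕ) := Fin.val_strictMono.monotone.comp hmono
  refine ⟨fun t => #{i | (b i : ℕ) < t}, ?_, by simp, ?_, fun t i => ?_⟩
  · intro s t hst
    obtain ⟨i, hi⟩ := hsurj (s.castPred (Fin.ne_last_of_lt hst))
    have h1 := hval.val_lt_card_filter_lt_iff s i
    have h2 := hval.val_lt_card_filter_lt_iff t i
    simp only [hi, Fin.coe_castPred, lt_irrefl, iff_false] at h1
    simp only [hi, Fin.coe_castPred, Fin.val_fin_lt.2 hst, iff_true] at h2
    simp only
    omega
  · simp [filter_true_of_mem]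
  · rw [← not_lt, hval.val_lt_card_filter_lt_iff, hval.val_lt_card_filter_lt_iff]
    simp only [Fin.val_castSucc, Fin.val_succ, not_lt, ← Fin.val_inj]
    omega

theorem exists_surjective_rank {m : ℕ} {α : Type*} [LinearOrder α] (g : Fin m → α) :
    ∃ r, ∃ b : Fin m → Fin r, Function.Surjective b ∧ ∀ i j, b i ≤ b j ↔ g i ≤ g j := by
  let e := (univ.image g).orderIsoOfFin rfl
  refine ⟨_, fun i => e.symm ⟨g i, mem_image_of_mem g (mem_univ i)⟩, fun t => ?_,
    fun i j => by simp⟩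
  obtain ⟨i, -, hi⟩ := mem_image.1 (e t).2
  exact ⟨i, by simp [hi]⟩

theorem exists_perm_blocks {m : ℕ} {α : Type*} [LinearOrder α] (f : Fin m → α) :
    ∃ σ : Equiv.Perm (Fin m), ∃ r : ℕ, ∃ c : Fin (r + 1) → ℕ,
      StrictMono c ∧ c 0 = 0 ∧ c (Fin.last r) = m ∧
      ∀ (s t : Fin r) (i j : Fin m),
        c s.castSucc ≤ i.val → i.val < c s.succ →
        c t.castSucc ≤ j.val → j.val < c t.succ → (s ≤ t ↔ f (σ i) ≤ f (σ j)) := by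
  obtain ⟨r, b, hsurj, hb⟩ := exists_surjective_rank (f ∘ Tuple.sort f)
  obtain ⟨c, hc, hc0, hclast, hblock⟩ := exists_blocks_of_monotone_surjective b
    (fun i j hij => (hb i j).2 (Tuple.monotone_sort f hij)) hsurj
  refine ⟨Tuple.sort f, r, c, hc, hc0, hclast, fun s t i j hi hi' hj hj' => ?_⟩
  rw [← (hblock s i).1 ⟨hi, hi'⟩, ← (hblock t j).1 ⟨hj, hj'⟩]
  exact hb i j

section
variable {ι : Type*} [Fintype ι] {r : ι → ι → Prop}

open scoped Classical in
noncomputable def predColex (r : ι → ι → Prop) (i : ι) : Colex (Finset ι) :=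
  toColex ({k | ReflGen r k i} : Finset ι)

theorem predColex_le_of_rel [PartialOrder ι] [IsTrans ι r] {i j : ι} (h : r i j) :
    predColex r i ≤ predColex r j := by
  refine Colex.toColex_le_toColex_of_subset fun k hk => ?_
  simp only [mem_filter, mem_univ, true_and] at hk ⊢
  rcases hk with _ | hki
  · exact ReflGen.single h
  · exact ReflGen.single (trans_of r hki h)

theorem reflGen_of_predColex_eq {i j : ι} (h : predColex r i = predColex r j) : ReflGen r i j := by
  classical
  have hi : i ∈ ({k | ReflGen r k i} : Finset ι) := by simp [ReflGen.refl]
  rw [predColex, predColex, toColex_inj] at h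
  simpa [h] using hi

end

theorem rel_of_reflGen_of_rel_of_reflGen {ι : Type*} {r : ι → ι → Prop} [IsTrans ι r] {a b c d : ι}
    (hab : ReflGen r a b) (hbc : r b c) (hcd : ReflGen r c d) : r a d := by
  have had : r a c := by
    rcases hab with _ | hab
    · exact hbc
    · exact trans_of r hab hbc
  rcases hcd with _ | hcd
  · exact had
  · exact trans_of r had hcd

theorem stmt6_general {m : ℕ} (A : Matrix (Fin m) (Fin m) ℕ) :
    ∃ ℓ : ℕ, 1 ≤ ℓ ∧ ∃ σ : Equiv.Perm (Fin m), ∃ r : ℕ, ∃ c : Fin (r + 1) → ℕ,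
      StrictMono c ∧ c 0 = 0 ∧ c (Fin.last r) = m ∧
      -- block upper triangular: entries whose row-block comes strictly after the
      -- column-block vanish
      (∀ (s t : Fin r) (i j : Fin m),
        c s.castSucc ≤ i.val → i.val < c s.succ →
        c t.castSucc ≤ j.val → j.val < c t.succ →
        t < s → (A ^ ℓ) (σ i) (σ j) = 0) ∧
      -- each diagonal block is either zero or primitive
      (∀ t : Fin r,
        (∀ p q, diagBlock (fun i j => (A ^ ℓ) (σ i) (σ j)) (c t.castSucc) (c t.succ) p q = 0) ∨
        (diagBlock (fun i j => (A ^ ℓ) (σ i) (σ j)) (c t.castSucc) (c t.succ)).IsPrimitiveNat) := by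
  obtain ⟨ℓ, hℓ, htr⟩ := A.exists_pow_pos_trans
  set pos : Fin m → Fin m → Prop := fun i j => 0 < (A ^ ℓ) i j
  obtain ⟨σ, r, c, hc, hc0, hclast, hblock⟩ := exists_perm_blocks (predColex pos)
  refine ⟨ℓ, hℓ, σ, r, c, hc, hc0, hclast, fun s t i j hi hi' hj hj' hts => ?_, fun t => ?_⟩
  · by_contra hne
    have := predColex_le_of_rel (show pos (σ i) (σ j) from Nat.pos_of_ne_zero hne)
    exact absurd ((hblock s t i j hi hi' hj hj').2 this) (not_le.2 hts)
  · refine or_iff_not_imp_left.2 fun hzero => ?_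
    simp only [not_forall] at hzero
    obtain ⟨p₀, q₀, hpq₀⟩ := hzero
    have hlinked : ∀ p q : {i : Fin m // c t.castSucc ≤ i.val ∧ i.val < c t.succ},
        ReflGen pos (σ p) (σ q) := fun p q =>
      reflGen_of_predColex_eq <| le_antisymm
        ((hblock t t p q p.2.1 p.2.2 q.2.1 q.2.2).1 le_rfl)
        ((hblock t t q p q.2.1 q.2.2 p.2.1 p.2.2).1 le_rfl)
    refine ⟨1, le_rfl, fun p q => ?_⟩
    rw [pow_one]
    show pos (σ p) (σ q)
    exact rel_of_reflGen_of_rel_of_reflGen (hlinked p p₀)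
      (show pos (σ p₀) (σ q₀) from Nat.pos_of_ne_zero hpq₀) (hlinked q₀ q)

theorem stmt6 {m : ℕ} (hm : 1 ≤ m) (A : Matrix (Fin m) (Fin m) ℕ) :
    ∃ ℓ : ℕ, 1 ≤ ℓ ∧ ∃ σ : Equiv.Perm (Fin m), ∃ r : ℕ, ∃ c : Fin (r + 1) → ℕ,
      StrictMono c ∧ c 0 = 0 ∧ c (Fin.last r) = m ∧
      -- block upper triangular: entries whose row-block comes strictly after the
      -- column-block vanish
      (∀ (s t : Fin r) (i j : Fin m),
        c s.castSucc ≤ i.val → i.val < c s.succ →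
        c t.castSucc ≤ j.val → j.val < c t.succ →
        t < s → (A ^ ℓ) (σ i) (σ j) = 0) ∧
      -- each diagonal block is either zero or primitive
      (∀ t : Fin r,
        (∀ p q, diagBlock (fun i j => (A ^ ℓ) (σ i) (σ j)) (c t.castSucc) (c t.succ) p q = 0) ∨
        (diagBlock (fun i j => (A ^ ℓ) (σ i) (σ j)) (c t.castSucc) (c t.succ)).IsPrimitiveNat) :=
  stmt6_general A
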